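/- Fundamental decomposition of the elasticity of market tightness with respect to productivity: let θ₀ := θ(p₀) > 0, suppose q is differentiable at θ₀ with q(θ₀) > 0, θ is differentiable at p₀, F(θ(p), p) = 0 for all p in a neighborhood of p₀, the fundamental surplus Y := p₀ − z − β·s·τ − β·(r+s)·h/(1−φ) is nonzero, and B ≠ 0, where η := −θ₀·q′(θ₀)/q(θ₀), K := (φ·h − (1−φ)·ℓ)/c, A := r + s + θ₀·q(θ₀)·(φ + β·q(θ₀)·K), and B := (r+s)·η + θ₀·q(θ₀)·(φ + β·(1−η)·q(θ₀)·K). Then the elasticity of tightness with respect to productivity satisfies θ′(p₀)·p₀/θ₀ = (A/B)·(p₀/Y). -/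

import Mathlib

/-!
Write the free-entry condition as `F x p = (1 - φ)/c · (p - p₁) - G x`, where `p₁` collects the
productivity-independent terms (so `Y = p₀ - p₁`) and `G = tightnessCost`.
Then `G (θ p)` is affine in `p` near `p₀`; differentiating gives `G'(θ₀) θ' = (1 - φ)/c`, while the
level gives `G θ₀ = (1 - φ)/c · Y`. Dividing, the elasticity is `G θ₀ / (θ₀ G'(θ₀)) · p₀ / Y`, and
multiplying numerator and denominator by `q θ₀` turns `G θ₀` into `A` and `θ₀ G'(θ₀)` into `B`.
-/

open Filter Topology

theorem HasDerivAt.mul_eq_of_comp_eventually_affine {g θ : ℝ → ℝ} {g' θ' a b p₀ : ℝ}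
    (hg : HasDerivAt g g' (θ p₀)) (hθ : HasDerivAt θ θ' p₀)
    (h : ∀ᶠ p in 𝓝 p₀, g (θ p) = a * p + b) : g' * θ' = a := by
  have haffine : HasDerivAt (fun p => a * p + b) a p₀ := by
    simpa using ((hasDerivAt_id p₀).const_mul a).add_const b
  exact (hg.comp p₀ hθ).unique (haffine.congr_of_eventuallyEq h)

theorem elasticity_eq_of_comp_eventually_affine {g θ : ℝ → ℝ} {g' θ' a p₀ p₁ : ℝ}
    (hg : HasDerivAt g g' (θ p₀)) (hθ : HasDerivAt θ θ' p₀)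
    (h : ∀ᶠ p in 𝓝 p₀, g (θ p) = a * (p - p₁)) (hg' : g' ≠ 0) (hY : p₀ - p₁ ≠ 0) :
    θ' * p₀ / θ p₀ = g (θ p₀) / (θ p₀ * g') * (p₀ / (p₀ - p₁)) := by
  have hslope : g' * θ' = a :=
    hg.mul_eq_of_comp_eventually_affine hθ (b := -a * p₁) <| h.mono fun p hp => by rw [hp]; ring
  have hlevel : g (θ p₀) = a * (p₀ - p₁) := h.self_of_nhds
  rw [hlevel, ← hslope]
  field_simp

noncomputable def tightnessCost (r s φ β K : ℝ) (q : ℝ → ℝ) (x : ℝ) : ℝ :=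
  (r + s) / q x + φ * x + β * K * (x * q x)

section tightnessCost

variable {r s φ β K x q' : ℝ} {q : ℝ → ℝ}

theorem hasDerivAt_tightnessCost (hq : HasDerivAt q q' x) (hqx : q x ≠ 0) :
    HasDerivAt (tightnessCost r s φ β K q)
      (-((r + s) * q') / q x ^ 2 + φ + β * K * (q x + x * q')) x := by
  refine ((((hasDerivAt_const x (r + s)).div hq hqx).add ((hasDerivAt_id' x).const_mul φ)).add
    (((hasDerivAt_id' x).mul hq).const_mul (β * K))).congr_deriv ?_
  ring

theorem mul_tightnessCost (hqx : q x ≠ 0) :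
    q x * tightnessCost r s φ β K q x = r + s + x * q x * (φ + β * q x * K) := by
  unfold tightnessCost
  field_simp
  ring

theorem mul_deriv_tightnessCost (hqx : q x ≠ 0) :
    x * q x * (-((r + s) * q') / q x ^ 2 + φ + β * K * (q x + x * q')) =
      (r + s) * (-x * q' / q x) + x * q x * (φ + β * (1 - (-x * q' / q x)) * q x * K) := by
  field_simp
  ring

end tightnessCost

theorem fundamental_decomposition_general
    (r s φ c h ℓ z τ β : ℝ) (q θ : ℝ → ℝ) (p₀ θ₀ q'θ₀ θ' : ℝ)
    (hβ : β = 1 / (1 + r))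
    (F : ℝ → ℝ → ℝ)
    (hF : ∀ x p, F x p = ((1 - φ) / c) * (p - z - β * s * τ - β * (r + s) * h / (1 - φ)) -
      (r + s) / q x - φ * x - (x * q x / (1 + r)) * ((φ * h - (1 - φ) * ℓ) / c))
    (hθ₀ : θ₀ = θ p₀)
    (hq_deriv : HasDerivAt q q'θ₀ θ₀) (hq_pos : 0 < q θ₀)
    (hθ_deriv : HasDerivAt θ θ' p₀)
    (h_eq : ∀ᶠ p in nhds p₀, F (θ p) p = 0)
    (Y : ℝ) (hY : Y = p₀ - z - β * s * τ - β * (r + s) * h / (1 - φ)) (hY_ne : Y ≠ 0)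
    (η K A B : ℝ)
    (hη : η = -θ₀ * q'θ₀ / q θ₀)
    (hK : K = (φ * h - (1 - φ) * ℓ) / c)
    (hA : A = r + s + θ₀ * q θ₀ * (φ + β * q θ₀ * K))
    (hB : B = (r + s) * η + θ₀ * q θ₀ * (φ + β * (1 - η) * q θ₀ * K))
    (hB_ne : B ≠ 0) :
    θ' * p₀ / θ₀ = (A / B) * (p₀ / Y) := by
  set G := tightnessCost r s φ β K q
  set G' := -((r + s) * q'θ₀) / q θ₀ ^ 2 + φ + β * K * (q θ₀ + θ₀ * q'θ₀)
  set p₁ := z + β * s * τ + β * (r + s) * h / (1 - φ)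
  have hq_ne : q θ₀ ≠ 0 := hq_pos.ne'
  have hG : HasDerivAt G G' (θ p₀) := hθ₀ ▸ hasDerivAt_tightnessCost hq_deriv hq_ne
  have hA' : A = q θ₀ * G θ₀ := by rw [hA, mul_tightnessCost hq_ne]
  have hB' : B = q θ₀ * (θ₀ * G') := by rw [hB, hη, ← mul_deriv_tightnessCost hq_ne]; ring
  have hG' : G' ≠ 0 := by rintro h0; exact hB_ne (by rw [hB', h0]; ring)
  have h_affine : ∀ᶠ p in 𝓝 p₀, G (θ p) = (1 - φ) / c * (p - p₁) := by
    filter_upwards [h_eq] with p hp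
    rw [hF] at hp
    simp only [G, tightnessCost, hK]
    linear_combination -hp + θ p * q (θ p) * ((φ * h - (1 - φ) * ℓ) / c) * hβ
  have hY' : Y = p₀ - p₁ := by rw [hY]; ring
  rw [hA', hB', mul_div_mul_left _ _ hq_ne, hY', hθ₀]
  exact elasticity_eq_of_comp_eventually_affine hG hθ_deriv h_affine hG' (hY' ▸ hY_ne)

/-- Fundamental decomposition of the elasticity of market tightness with respect to
productivity: `θ′(p₀)·p₀/θ₀ = (A/B)·(p₀/Y)`. -/
theorem fundamental_decomposition
    (r s φ c h ℓ z τ β : ℝ) (q θ : ℝ → ℝ) (p₀ θ₀ q'θ₀ θ' : ℝ)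
    (hr : 0 < r) (hs : s ∈ Set.Ioo (0 : ℝ) 1) (hφ : φ ∈ Set.Ioo (0 : ℝ) 1)
    (hc : 0 < c) (hh : 0 ≤ h) (hℓ : 0 ≤ ℓ)
    (hβ : β = 1 / (1 + r))
    (F : ℝ → ℝ → ℝ)
    (hF : ∀ x p, F x p = ((1 - φ) / c) * (p - z - β * s * τ - β * (r + s) * h / (1 - φ)) -
      (r + s) / q x - φ * x - (x * q x / (1 + r)) * ((φ * h - (1 - φ) * ℓ) / c))
    (hθ₀ : θ₀ = θ p₀) (hθ₀_pos : 0 < θ₀)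
    (hq_deriv : HasDerivAt q q'θ₀ θ₀) (hq_pos : 0 < q θ₀)
    (hθ_deriv : HasDerivAt θ θ' p₀)
    (h_eq : ∀ᶠ p in nhds p₀, F (θ p) p = 0)
    (Y : ℝ) (hY : Y = p₀ - z - β * s * τ - β * (r + s) * h / (1 - φ)) (hY_ne : Y ≠ 0)
    (η K A B : ℝ)
    (hη : η = -θ₀ * q'θ₀ / q θ₀)
    (hK : K = (φ * h - (1 - φ) * ℓ) / c)
    (hA : A = r + s + θ₀ * q θ₀ * (φ + β * q θ₀ * K))
    (hB : B = (r + s) * η + θ₀ * q θ₀ * (φ + β * (1 - η) * q θ₀ * K))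
    (hB_ne : B ≠ 0) :
    θ' * p₀ / θ₀ = (A / B) * (p₀ / Y) :=
  fundamental_decomposition_general r s φ c h ℓ z τ β q θ p₀ θ₀ q'θ₀ θ' hβ F hF hθ₀ hq_deriv hq_pos
    hθ_deriv h_eq Y hY hY_ne η K A B hη hK hA hB hB_ne
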